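/- arXiv:2408.01864 — 7 statements merged into one kernel-verified Lean document; each statement's English description precedes it below -/
import Mathlib

section
/- The quantity Q(x,y) = (x-y)² - x - y is invariant under both L' and L''; that is, Q(L'(x,y)) = Q(x,y) and Q(L''(x,y)) = Q(x,y) for all (x,y) ∈ ℤ². Consequently, every point obtained from P by iterated applications of L' and L'' lies on the same parabola x + y + 2m = (x-y)², where -2m = Q(P). -/
def Lp : ℤ × ℤ → ℤ × ℤ := fun p => (-p.1 + 2*p.2 + 1, p.2)
def Lpp : ℤ × ℤ → ℤ × ℤ := fun p => (p.1, 2*p.1 - p.2 + 1)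
def Mr : ℤ × ℤ → ℤ × ℤ := fun p => (p.1 + 1, p.2)
def Ml : ℤ × ℤ → ℤ × ℤ := fun p => (p.1 - 1, p.2)
def Mu : ℤ × ℤ → ℤ × ℤ := fun p => (p.1, p.2 + 1)
def Md : ℤ × ℤ → ℤ × ℤ := fun p => (p.1, p.2 - 1)

def ops : Set ((ℤ × ℤ) → (ℤ × ℤ)) := {Lp, Lpp, Mr, Ml, Mu, Md}

/-- The parabolic-taxicab distance: minimal number of operators from `ops`
needed to map `P` to `Q`. -/
noncomputable def dpc (P Q : ℤ × ℤ) : ℕ :=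
  sInf {n | ∃ l : List ((ℤ × ℤ) → (ℤ × ℤ)), l.length = n ∧ (∀ f ∈ l, f ∈ ops) ∧
    l.foldr (fun f p => f p) P = Q}

def Qf : ℤ × ℤ → ℤ := fun p => (p.1 - p.2)^2 - p.1 - p.2

theorem Qf_Lp (p : ℤ × ℤ) : Qf (Lp p) = Qf p := by
  simp only [Qf, Lp]
  ring

theorem Qf_Lpp (p : ℤ × ℤ) : Qf (Lpp p) = Qf p := by
  simp only [Qf, Lpp]
  ring

theorem List.foldr_apply_invariant {α β : Type*} (g : α → β) {l : List (α → α)}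
    (hl : ∀ f ∈ l, ∀ x, g (f x) = g x) (x : α) :
    g (l.foldr (fun f p => f p) x) = g x := by
  induction l with
  | nil => rfl
  | cons f t ih =>
    rw [List.foldr_cons, hl f List.mem_cons_self, ih fun h hh => hl h (List.mem_cons_of_mem f hh)]

theorem Qf_invariant :
    (∀ p : ℤ × ℤ, Qf (Lp p) = Qf p) ∧
    (∀ p : ℤ × ℤ, Qf (Lpp p) = Qf p) ∧
    (∀ (P : ℤ × ℤ) (l : List ((ℤ × ℤ) → (ℤ × ℤ))),
      (∀ f ∈ l, f = Lp ∨ f = Lpp) →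
      Qf (l.foldr (fun f p => f p) P) = Qf P) := by
  refine ⟨Qf_Lp, Qf_Lpp, fun P l hl => List.foldr_apply_invariant Qf ?_ P⟩
  intro f hf
  rcases hl f hf with rfl | rfl
  exacts [Qf_Lp, Qf_Lpp]
end

section
/- For every integer r ≥ 0, every point (x,y) ∈ ℤ² with d_pc((0,0),(x,y)) ≤ r satisfies |y - x| ≤ r; equivalently, the ball B(O,r) is contained between the lines y = x - r and y = x + r. -/
/-!
The quantity `y - x` changes by at most one in absolute value under each operator: the moves
`M', M'', M''', M⁴` shift it by `±1`, while `L'` and `L''` send it to `-(y - x) ∓ 1`. Along a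
shortest word of length `d_pc(O, (x, y))` it therefore grows from `0` to at most that length.
Such a word exists because the four moves alone already reach every point.
-/

section Orbit

def opsOrbit (P : ℤ × ℤ) : Set (ℤ × ℤ) :=
  {Q | ∃ l : List ((ℤ × ℤ) → (ℤ × ℤ)), (∀ f ∈ l, f ∈ ops) ∧ l.foldr (fun f p => f p) P = Q}

variable {P Q : ℤ × ℤ}

lemma mem_opsOrbit_self (P : ℤ × ℤ) : P ∈ opsOrbit P :=
  ⟨[], by simp, rfl⟩

lemma apply_mem_opsOrbit {f : ℤ × ℤ → ℤ × ℤ} (hf : f ∈ ops) (hQ : Q ∈ opsOrbit P) :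
    f Q ∈ opsOrbit P := by
  obtain ⟨l, hl, rfl⟩ := hQ
  exact ⟨f :: l, by simpa using ⟨hf, hl⟩, rfl⟩

lemma shift_fst_mem_opsOrbit (hQ : Q ∈ opsOrbit P) (k : ℤ) : (Q.1 + k, Q.2) ∈ opsOrbit P := by
  induction k using Int.induction_on with
  | zero => simpa using hQ
  | succ k ih =>
    simpa [Mr, add_assoc] using apply_mem_opsOrbit (f := Mr) (by simp [ops]) ih
  | pred k ih =>
    simpa [Ml, sub_eq_add_neg, add_assoc] using apply_mem_opsOrbit (f := Ml) (by simp [ops]) ih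

lemma shift_snd_mem_opsOrbit (hQ : Q ∈ opsOrbit P) (k : ℤ) : (Q.1, Q.2 + k) ∈ opsOrbit P := by
  induction k using Int.induction_on with
  | zero => simpa using hQ
  | succ k ih =>
    simpa [Mu, add_assoc] using apply_mem_opsOrbit (f := Mu) (by simp [ops]) ih
  | pred k ih =>
    simpa [Md, sub_eq_add_neg, add_assoc] using apply_mem_opsOrbit (f := Md) (by simp [ops]) ih

lemma opsOrbit_eq_univ (P : ℤ × ℤ) : opsOrbit P = Set.univ := by
  refine Set.eq_univ_of_forall fun Q => ?_
  have h := shift_snd_mem_opsOrbit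
    (shift_fst_mem_opsOrbit (mem_opsOrbit_self P) (Q.1 - P.1)) (Q.2 - P.2)
  simpa using h

lemma exists_list_length_eq_dpc (P Q : ℤ × ℤ) :
    ∃ l : List ((ℤ × ℤ) → (ℤ × ℤ)), l.length = dpc P Q ∧ (∀ f ∈ l, f ∈ ops) ∧
      l.foldr (fun f p => f p) P = Q := by
  obtain ⟨l, hl, hlQ⟩ : Q ∈ opsOrbit P := opsOrbit_eq_univ P ▸ Set.mem_univ Q
  exact Nat.sInf_mem (s := {n | ∃ l : List ((ℤ × ℤ) → (ℤ × ℤ)), l.length = n ∧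
    (∀ f ∈ l, f ∈ ops) ∧ l.foldr (fun f p => f p) P = Q}) ⟨l.length, l, rfl, hl, hlQ⟩

end Orbit

lemma abs_gap_apply_le {f : ℤ × ℤ → ℤ × ℤ} (hf : f ∈ ops) (p : ℤ × ℤ) :
    |(f p).2 - (f p).1| ≤ |p.2 - p.1| + 1 := by
  simp only [ops, Set.mem_insert_iff, Set.mem_singleton_iff] at hf
  rcases hf with rfl | rfl | rfl | rfl | rfl | rfl <;>
    simp only [Lp, Lpp, Mr, Ml, Mu, Md] <;>
    cases abs_cases (p.2 - p.1) <;> rw [abs_le] <;> constructor <;> linarith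

lemma abs_gap_foldr_le {l : List ((ℤ × ℤ) → (ℤ × ℤ))} (hl : ∀ f ∈ l, f ∈ ops) (P : ℤ × ℤ) :
    |(l.foldr (fun f p => f p) P).2 - (l.foldr (fun f p => f p) P).1|
      ≤ |P.2 - P.1| + l.length := by
  induction l with
  | nil => simp
  | cons f l ih =>
    have hf : f ∈ ops := hl f List.mem_cons_self
    have ih := ih fun g hg => hl g (List.mem_cons_of_mem f hg)
    simp only [List.foldr_cons, List.length_cons, Nat.cast_succ]
    linarith [abs_gap_apply_le hf (l.foldr (fun f p => f p) P)]

theorem ball_between_lines (r : ℕ) (x y : ℤ) (h : dpc (0, 0) (x, y) ≤ r) :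
    |y - x| ≤ (r : ℤ) := by
  obtain ⟨l, hlen, hl, hxy⟩ := exists_list_length_eq_dpc (0, 0) (x, y)
  have hgap := abs_gap_foldr_le hl (0, 0)
  rw [hxy] at hgap
  simp only [sub_self, abs_zero, zero_add] at hgap
  omega
end

section
/- For every integer r ≥ 0 and every point (x,y) ∈ ℤ² with d_pc((0,0),(x,y)) = r, if |y - x| < r then y - x ≡ r (mod 2). In other words, points on the boundary of the ball of radius r lying strictly between the lines y = x ± r are only on lines y = x + c with c ≡ r (mod 2). -/
lemma step_parity (f : (ℤ × ℤ) → ℤ × ℤ) (hf : f ∈ ops) (p : ℤ × ℤ) :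
    ((f p).2 - (f p).1) % 2 = (p.2 - p.1 + 1) % 2 := by
  simp only [ops, Set.mem_insert_iff, Set.mem_singleton_iff] at hf
  rcases hf with rfl | rfl | rfl | rfl | rfl | rfl <;>
    simp [Lp, Lpp, Mr, Ml, Mu, Md] <;> omega

lemma fold_parity (l : List ((ℤ × ℤ) → ℤ × ℤ)) (hl : ∀ f ∈ l, f ∈ ops) (P : ℤ × ℤ) :
    ((l.foldr (fun f p => f p) P).2 - (l.foldr (fun f p => f p) P).1) % 2
      = (P.2 - P.1 + l.length) % 2 := by
  induction l with
  | nil => simp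
  | cons f t ih =>
      have hf : f ∈ ops := hl f (by simp)
      have ht : ∀ g ∈ t, g ∈ ops := fun g hg => hl g (by simp [hg])
      simp only [List.foldr_cons, List.length_cons]
      have h2 := ih ht
      rw [step_parity f hf]
      generalize List.foldr (fun f p => f p) P t = q at h2 ⊢
      omega

theorem boundary_parity (r : ℕ) (x y : ℤ) (h : dpc (0, 0) (x, y) = r)
    (hlt : |y - x| < (r : ℤ)) : (y - x) % 2 = (r : ℤ) % 2 := by
  set S := {n | ∃ l : List ((ℤ × ℤ) → (ℤ × ℤ)), l.length = n ∧ (∀ f ∈ l, f ∈ ops) ∧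
    l.foldr (fun f p => f p) ((0 : ℤ), (0 : ℤ)) = (x, y)} with hS
  by_cases hne : S.Nonempty
  · have hmem : sInf S ∈ S := Nat.sInf_mem hne
    have hr : sInf S = r := h
    rw [hr] at hmem
    obtain ⟨l, hlen, hops, hfold⟩ := hmem
    have := fold_parity l hops (0, 0)
    rw [hfold] at this
    simp at this
    rw [hlen] at this
    omega
  · have : S = ∅ := Set.not_nonempty_iff_eq_empty.mp hne
    have h0 : dpc (0, 0) (x, y) = 0 := by
      unfold dpc; rw [← hS, this]; simp
    rw [h0] at h
    have : (r : ℤ) = 0 := by exact_mod_cast h.symm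
    rw [this] at hlt
    have := abs_nonneg (y - x)
    omega
end

section
/- For every integer r ≥ 0, the maximal x-coordinate among points (x, x+r) with d_pc(O,(x,x+r)) = r is x = r(r-1)/2, and the maximal x-coordinate among points (x, x-r) with d_pc(O,(x,x-r)) = r is x = r(r+1)/2. -/
def diag (p : ℤ × ℤ) : ℤ := p.2 - p.1

def weight (p : ℤ × ℤ) : ℤ := 4 * p.1 + 2 * diag p - diag p ^ 2

lemma abs_diag_le_and_weight_le_of_mem_ops {f : ℤ × ℤ → ℤ × ℤ} (hf : f ∈ ops) (p : ℤ × ℤ) :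
    |diag (f p)| ≤ |diag p| + 1 ∧ weight (f p) ≤ weight p + 2 * |diag p| + 1 := by
  obtain ⟨x, y⟩ := p
  have hle := le_abs_self (y - x)
  have hge := neg_abs_le (y - x)
  simp only [ops, Set.mem_insert_iff, Set.mem_singleton_iff] at hf
  rcases hf with rfl | rfl | rfl | rfl | rfl | rfl <;>
  · simp only [diag, weight, Lp, Lpp, Mr, Ml, Mu, Md]
    exact ⟨abs_le.mpr ⟨by linarith, by linarith⟩, by linarith⟩

lemma abs_diag_le_length_and_weight_le_sq (l : List (ℤ × ℤ → ℤ × ℤ)) (hl : ∀ f ∈ l, f ∈ ops) :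
    |diag (l.foldr (fun f p => f p) (0, 0))| ≤ l.length ∧
      weight (l.foldr (fun f p => f p) (0, 0)) ≤ (l.length : ℤ) ^ 2 := by
  induction l with
  | nil => simp [diag, weight]
  | cons f t ih =>
    obtain ⟨hd, hw⟩ := ih fun g hg => hl g (List.mem_cons_of_mem f hg)
    obtain ⟨hd', hw'⟩ := abs_diag_le_and_weight_le_of_mem_ops (hl f List.mem_cons_self)
      (t.foldr (fun f p => f p) (0, 0))
    simp only [List.foldr_cons, List.length_cons, Nat.cast_succ]
    exact ⟨by linarith, by linarith⟩

lemma exists_ops_foldr_eq (P Q : ℤ × ℤ) :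
    ∃ l : List (ℤ × ℤ → ℤ × ℤ), (∀ f ∈ l, f ∈ ops) ∧ l.foldr (fun f p => f p) P = Q := by
  set Reach : ℤ × ℤ → Prop :=
    fun Q => ∃ l : List (ℤ × ℤ → ℤ × ℤ), (∀ f ∈ l, f ∈ ops) ∧ l.foldr (fun f p => f p) P = Q
  have step {f} (hf : f ∈ ops) {Q} : Reach Q → Reach (f Q) := by
    rintro ⟨l, hl, rfl⟩
    exact ⟨f :: l, by simpa [hf] using hl, rfl⟩
  suffices ∀ a b : ℤ, Reach (P.1 + a, P.2 + b) by simpa using this (Q.1 - P.1) (Q.2 - P.2)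
  intro a b
  induction a with
  | zero =>
    induction b with
    | zero => exact ⟨[], by simp, by simp⟩
    | succ b ih => simpa [Mu, add_assoc] using step (f := Mu) (by simp [ops]) ih
    | pred b ih => simpa [Md, add_sub_assoc] using step (f := Md) (by simp [ops]) ih
  | succ a ih => simpa [Mr, add_assoc] using step (f := Mr) (by simp [ops]) ih
  | pred a ih => simpa [Ml, add_sub_assoc] using step (f := Ml) (by simp [ops]) ih

lemma dpc_le_length {P Q : ℤ × ℤ} {l : List (ℤ × ℤ → ℤ × ℤ)} (hl : ∀ f ∈ l, f ∈ ops)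
    (h : l.foldr (fun f p => f p) P = Q) : dpc P Q ≤ l.length :=
  Nat.sInf_le ⟨l, rfl, hl, h⟩

lemma exists_length_eq_dpc (P Q : ℤ × ℤ) :
    ∃ l : List (ℤ × ℤ → ℤ × ℤ), l.length = dpc P Q ∧ (∀ f ∈ l, f ∈ ops) ∧
      l.foldr (fun f p => f p) P = Q := by
  obtain ⟨l, hl, h⟩ := exists_ops_foldr_eq P Q
  exact Nat.sInf_mem (s := {n | ∃ l : List (ℤ × ℤ → ℤ × ℤ), l.length = n ∧ (∀ f ∈ l, f ∈ ops) ∧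
    l.foldr (fun f p => f p) P = Q}) ⟨l.length, l, rfl, hl, h⟩

lemma abs_diag_le_dpc_and_weight_le_sq (p : ℤ × ℤ) :
    |diag p| ≤ dpc (0, 0) p ∧ weight p ≤ (dpc (0, 0) p : ℤ) ^ 2 := by
  obtain ⟨l, hlen, hl, rfl⟩ := exists_length_eq_dpc (0, 0) p
  rw [← hlen]
  exact abs_diag_le_length_and_weight_le_sq l hl

def tri (k : ℤ) : ℤ := k * (k + 1) / 2

lemma two_mul_tri (k : ℤ) : 2 * tri k = k * (k + 1) :=
  Int.mul_ediv_cancel' (Int.two_dvd_mul_add_one k)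

lemma tri_pred_add (k : ℤ) : tri (k - 1) + k = tri k := by
  linarith [two_mul_tri k, two_mul_tri (k - 1)]

lemma tri_succ (k : ℤ) : tri (k + 1) = 2 * tri k - tri (k - 1) + 1 := by
  linarith [two_mul_tri k, two_mul_tri (k - 1), two_mul_tri (k + 1)]

lemma exists_path_tri (k : ℕ) :
    (∃ l : List (ℤ × ℤ → ℤ × ℤ), l.length = k ∧ (∀ f ∈ l, f ∈ ops) ∧
      l.foldr (fun f p => f p) (0, 0) = (tri (k - 1), tri k)) ∧
    (∃ l : List (ℤ × ℤ → ℤ × ℤ), l.length = k ∧ (∀ f ∈ l, f ∈ ops) ∧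
      l.foldr (fun f p => f p) (0, 0) = (tri k, tri (k - 1))) := by
  induction k with
  | zero => exact ⟨⟨[], rfl, by simp, rfl⟩, ⟨[], rfl, by simp, rfl⟩⟩
  | succ k ih =>
    obtain ⟨⟨l₁, hlen₁, hl₁, h₁⟩, ⟨l₂, hlen₂, hl₂, h₂⟩⟩ := ih
    refine ⟨⟨Lpp :: l₂, by simp [hlen₂], by simpa [ops] using hl₂, ?_⟩,
      ⟨Lp :: l₁, by simp [hlen₁], by simpa [ops] using hl₁, ?_⟩⟩
    · simp only [List.foldr_cons, h₂, Lpp, Nat.cast_succ, add_sub_cancel_right, tri_succ]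
    · simp only [List.foldr_cons, h₁, Lp, Nat.cast_succ, add_sub_cancel_right, tri_succ]
      congr 1
      ring

lemma dpc_tri (k : ℕ) :
    dpc (0, 0) (tri (k - 1), tri k) = k ∧ dpc (0, 0) (tri k, tri (k - 1)) = k := by
  obtain ⟨⟨l₁, hlen₁, hl₁, h₁⟩, ⟨l₂, hlen₂, hl₂, h₂⟩⟩ := exists_path_tri k
  have hdiag₁ : diag (tri (k - 1), tri k) = k := by simp [diag, ← tri_pred_add (k : ℤ)]
  have hdiag₂ : diag (tri k, tri (k - 1)) = -k := by simp [diag, ← tri_pred_add (k : ℤ)]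
  have hge₁ := (abs_diag_le_dpc_and_weight_le_sq (tri (k - 1), tri k)).1
  have hge₂ := (abs_diag_le_dpc_and_weight_le_sq (tri k, tri (k - 1))).1
  rw [hdiag₁, Nat.abs_cast] at hge₁
  rw [hdiag₂, abs_neg, Nat.abs_cast] at hge₂
  exact ⟨le_antisymm ((dpc_le_length hl₁ h₁).trans_eq hlen₁) (by exact_mod_cast hge₁),
    le_antisymm ((dpc_le_length hl₂ h₂).trans_eq hlen₂) (by exact_mod_cast hge₂)⟩

lemma fst_le_tri_pred_of_diag_eq {p : ℤ × ℤ} {k : ℕ} (hk : dpc (0, 0) p = k)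
    (hd : diag p = k) : p.1 ≤ tri (k - 1) := by
  have hw := (abs_diag_le_dpc_and_weight_le_sq p).2
  rw [hk, weight, hd] at hw
  linarith [two_mul_tri (k - 1)]

lemma fst_le_tri_of_diag_eq_neg {p : ℤ × ℤ} {k : ℕ} (hk : dpc (0, 0) p = k)
    (hd : diag p = -k) : p.1 ≤ tri k := by
  have hw := (abs_diag_le_dpc_and_weight_le_sq p).2
  rw [hk, weight, hd] at hw
  linarith [two_mul_tri k]

theorem max_x_on_extreme_lines (r : ℕ) :
    IsGreatest {x : ℤ | dpc (0, 0) (x, x + (r : ℤ)) = r} ((r : ℤ) * ((r : ℤ) - 1) / 2) ∧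
    IsGreatest {x : ℤ | dpc (0, 0) (x, x - (r : ℤ)) = r} ((r : ℤ) * ((r : ℤ) + 1) / 2) := by
  have hlo : (r : ℤ) * ((r : ℤ) - 1) / 2 = tri (r - 1) := by rw [tri, sub_add_cancel, mul_comm]
  obtain ⟨hup, hdown⟩ := dpc_tri r
  refine ⟨⟨?_, fun x hx => ?_⟩, ⟨?_, fun x hx => ?_⟩⟩
  · show dpc (0, 0) (_, _ + _) = r
    rwa [hlo, tri_pred_add]
  · rw [hlo]
    exact fst_le_tri_pred_of_diag_eq hx (by simp [diag])
  · show dpc (0, 0) (tri r, tri r - r) = r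
    rwa [← eq_sub_of_add_eq (tri_pred_add (r : ℤ))]
  · exact fst_le_tri_of_diag_eq_neg hx (by simp [diag])
end

section
/- For every integer r ≥ 0 and every integer x with 0 ≤ x ≤ r(r-1)/2, the point (x, x+r) satisfies d_pc(O, (x, x+r)) = r. Similarly, for every integer x with 0 ≤ x ≤ r(r+1)/2, d_pc(O, (x, x-r)) = r. -/
lemma step_bound {f : (ℤ × ℤ) → (ℤ × ℤ)} (hf : f ∈ ops) (p : ℤ × ℤ) :
    ((f p).2 - (f p).1).natAbs ≤ (p.2 - p.1).natAbs + 1 := by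
  rcases hf with h|h|h|h|h|h <;> subst h <;>
    simp only [Lp, Lpp, Mr, Ml, Mu, Md] <;> omega

lemma list_bound (l : List ((ℤ × ℤ) → (ℤ × ℤ))) (h : ∀ f ∈ l, f ∈ ops) (p : ℤ × ℤ) :
    ((l.foldr (fun f q => f q) p).2 - (l.foldr (fun f q => f q) p).1).natAbs ≤
      (p.2 - p.1).natAbs + l.length := by
  induction l with
  | nil => simp
  | cons f t ih =>
    have hf : f ∈ ops := h f (by simp)
    have ht : ∀ g ∈ t, g ∈ ops := fun g hg => h g (by simp [hg])
    have := step_bound hf (t.foldr (fun f q => f q) p)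
    have := ih ht
    rw [List.foldr_cons, List.length_cons]
    set q := t.foldr (fun f q => f q) p with hq
    omega

lemma build (r : ℕ) : ∀ x : ℤ, 0 ≤ x →
    (2*x ≤ (r : ℤ) * ((r : ℤ) - 1) →
      ∃ l : List ((ℤ × ℤ) → (ℤ × ℤ)), l.length = r ∧ (∀ f ∈ l, f ∈ ops) ∧
        l.foldr (fun f p => f p) (0, 0) = (x, x + (r : ℤ))) ∧
    (2*x ≤ (r : ℤ) * ((r : ℤ) + 1) →
      ∃ l : List ((ℤ × ℤ) → (ℤ × ℤ)), l.length = r ∧ (∀ f ∈ l, f ∈ ops) ∧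
        l.foldr (fun f p => f p) (0, 0) = (x, x - (r : ℤ))) := by
  induction r with
  | zero =>
    intro x hx0
    constructor <;> intro hx <;>
    · have : x = 0 := by push_cast at hx; omega
      subst this
      exact ⟨[], by simp⟩
  | succ r ih =>
    intro x hx0
    have hR : ((r + 1 : ℕ) : ℤ) = (r : ℤ) + 1 := by push_cast; ring
    constructor
    · -- target (x, x + (r+1)),  2x ≤ (r+1)*r
      intro hx
      have hx' : 2*x ≤ (r : ℤ) * ((r : ℤ) + 1) := by rw [hR] at hx; nlinarith
      obtain ⟨l, hl, hmem, hfold⟩ := (ih x hx0).2 hx'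
      refine ⟨Lpp :: l, by simp [hl], ?_, ?_⟩
      · intro f hf
        rcases hf with _|⟨_,hf⟩
        · simp [ops]
        · exact hmem _ hf
      · simp only [List.foldr_cons, hfold, Lpp, hR]
        exact Prod.ext rfl (by ring)
    · -- target (x, x - (r+1)),  2x ≤ (r+1)*(r+2)
      intro hx
      rw [hR] at hx
      by_cases h1 : 2*x ≤ (r : ℤ) * ((r : ℤ) + 1)
      · obtain ⟨l, hl, hmem, hfold⟩ := (ih x hx0).2 h1
        refine ⟨Md :: l, by simp [hl], ?_, ?_⟩
        · intro f hf
          rcases hf with _|⟨_,hf⟩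
          · simp [ops]
          · exact hmem _ hf
        · simp only [List.foldr_cons, hfold, Md, hR]
          exact Prod.ext rfl (by ring)
      · push_neg at h1
        by_cases h2 : 2*x = (r : ℤ) * ((r : ℤ) + 1) + 2
        · have hx1 : (0:ℤ) ≤ x - 1 := by nlinarith
          have hx2 : 2*(x-1) ≤ (r : ℤ) * ((r : ℤ) + 1) := by linarith
          obtain ⟨l, hl, hmem, hfold⟩ := (ih (x-1) hx1).2 hx2
          refine ⟨Mr :: l, by simp [hl], ?_, ?_⟩
          · intro f hf
            rcases hf with _|⟨_,hf⟩
            · simp [ops]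
            · exact hmem _ hf
          · simp only [List.foldr_cons, hfold, Mr, hR]
            exact Prod.ext (by ring) (by ring)
        · -- 2x ≥ r(r+1) + 4, use Lp from (x - 2r - 1, x - r - 1)
          obtain ⟨k, hk⟩ := Int.even_mul_succ_self (r:ℤ)
          have h3 : (r : ℤ) * ((r : ℤ) + 1) + 4 ≤ 2*x := by omega
          have hx1 : (0:ℤ) ≤ x - 2*(r:ℤ) - 1 := by nlinarith [sq_nonneg ((r:ℤ) - 1), sq_nonneg ((r:ℤ) - 2)]
          have hx2 : 2*(x - 2*(r:ℤ) - 1) ≤ (r : ℤ) * ((r : ℤ) - 1) := by nlinarith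
          obtain ⟨l, hl, hmem, hfold⟩ := (ih (x - 2*(r:ℤ) - 1) hx1).1 hx2
          refine ⟨Lp :: l, by simp [hl], ?_, ?_⟩
          · intro f hf
            rcases hf with _|⟨_,hf⟩
            · simp [ops]
            · exact hmem _ hf
          · simp only [List.foldr_cons, hfold, Lp, hR]
            exact Prod.ext (by ring) (by ring)

theorem first_quadrant_extreme_lines (r : ℕ) (x : ℤ) :
    (0 ≤ x → x ≤ (r : ℤ) * ((r : ℤ) - 1) / 2 → dpc (0, 0) (x, x + (r : ℤ)) = r) ∧
    (0 ≤ x → x ≤ (r : ℤ) * ((r : ℤ) + 1) / 2 → dpc (0, 0) (x, x - (r : ℤ)) = r) := by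
  constructor
  · intro hx0 hx
    have hx' : 2*x ≤ (r : ℤ) * ((r : ℤ) - 1) := by
      have h2 : (0:ℤ) < 2 := by norm_num
      have := (Int.le_ediv_iff_mul_le h2).mp hx
      linarith
    obtain ⟨l, hl, hmem, hfold⟩ := (build r x hx0).1 hx'
    unfold dpc
    apply le_antisymm
    · exact Nat.sInf_le ⟨l, hl, hmem, hfold⟩
    · refine le_csInf ⟨r, l, hl, hmem, hfold⟩ ?_
      rintro n ⟨l', hl', hmem', hfold'⟩
      have := list_bound l' hmem' (0,0)
      rw [hfold'] at this
      simp at this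
      omega
  · intro hx0 hx
    have hx' : 2*x ≤ (r : ℤ) * ((r : ℤ) + 1) := by
      have h2 : (0:ℤ) < 2 := by norm_num
      have := (Int.le_ediv_iff_mul_le h2).mp hx
      linarith
    obtain ⟨l, hl, hmem, hfold⟩ := (build r x hx0).2 hx'
    unfold dpc
    apply le_antisymm
    · exact Nat.sInf_le ⟨l, hl, hmem, hfold⟩
    · refine le_csInf ⟨r, l, hl, hmem, hfold⟩ ?_
      rintro n ⟨l', hl', hmem', hfold'⟩
      have := list_bound l' hmem' (0,0)
      rw [hfold'] at this
      simp at this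
      omega
end

section
/- The set of points X with d_pc(O,X) = r lying on the line y = x + r is exactly {(x, x+r) : -r ≤ x ≤ r(r-1)/2}, and the set lying on the line y = x - r is exactly {(x, x-r) : 0 ≤ x ≤ r(r+1)/2}. -/
def ReachableIn (P : ℤ × ℤ) (n : ℕ) (Q : ℤ × ℤ) : Prop :=
  ∃ l : List ((ℤ × ℤ) → (ℤ × ℤ)), l.length = n ∧ (∀ f ∈ l, f ∈ ops) ∧
    l.foldr (fun f p => f p) P = Q

namespace ReachableIn

variable {P Q : ℤ × ℤ} {n : ℕ}

theorem zero_iff : ReachableIn P 0 Q ↔ Q = P := by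
  constructor
  · rintro ⟨l, hl, -, rfl⟩
    rw [List.length_eq_zero_iff.mp hl]
    rfl
  · rintro rfl
    exact ⟨[], rfl, by simp, rfl⟩

theorem refl (P : ℤ × ℤ) : ReachableIn P 0 P := zero_iff.mpr rfl

theorem succ_iff : ReachableIn P (n + 1) Q ↔ ∃ f ∈ ops, ∃ R, ReachableIn P n R ∧ f R = Q := by
  constructor
  · rintro ⟨_ | ⟨f, l⟩, hl, hops, rfl⟩
    · simp at hl
    · exact ⟨f, hops f List.mem_cons_self, _,
        ⟨l, by simpa using hl, fun g hg => hops g (List.mem_cons_of_mem f hg), rfl⟩, rfl⟩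
  · rintro ⟨f, hf, R, ⟨l, rfl, hops, rfl⟩, rfl⟩
    refine ⟨f :: l, rfl, ?_, rfl⟩
    simpa [hf] using hops

theorem step {R : ℤ × ℤ} (h : ReachableIn P n R) {f : ℤ × ℤ → ℤ × ℤ} (hf : f ∈ ops) :
    ReachableIn P (n + 1) (f R) :=
  succ_iff.mpr ⟨f, hf, R, h, rfl⟩

theorem exists_reachableIn_add (P : ℤ × ℤ) (a b : ℤ) :
    ∃ n, ReachableIn P n (P.1 + a, P.2 + b) := by
  have horiz : ∀ a : ℤ, ∃ n, ReachableIn P n (P.1 + a, P.2) := by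
    intro a
    induction a using Int.induction_on with
    | zero => exact ⟨0, by simpa using refl P⟩
    | succ i ih =>
      obtain ⟨n, h⟩ := ih
      exact ⟨n + 1, by simpa [Mr, add_assoc] using h.step (f := Mr) (by simp [ops])⟩
    | pred i ih =>
      obtain ⟨n, h⟩ := ih
      exact ⟨n + 1, by simpa [Ml, sub_eq_add_neg, add_assoc] using h.step (f := Ml) (by simp [ops])⟩
  induction b using Int.induction_on with
  | zero => simpa using horiz a
  | succ i ih =>
    obtain ⟨n, h⟩ := ih
    exact ⟨n + 1, by simpa [Mu, add_assoc] using h.step (f := Mu) (by simp [ops])⟩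
  | pred i ih =>
    obtain ⟨n, h⟩ := ih
    exact ⟨n + 1, by simpa [Md, sub_eq_add_neg, add_assoc] using h.step (f := Md) (by simp [ops])⟩

theorem exists_reachableIn (P Q : ℤ × ℤ) : ∃ n, ReachableIn P n Q := by
  simpa using exists_reachableIn_add P (Q.1 - P.1) (Q.2 - P.2)

end ReachableIn

theorem reachableIn_dpc (P Q : ℤ × ℤ) : ReachableIn P (dpc P Q) Q :=
  Nat.sInf_mem (ReachableIn.exists_reachableIn P Q)

theorem dpc_eq_of_reachableIn {P Q : ℤ × ℤ} {n : ℕ} (h : ReachableIn P n Q)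
    (hmin : ∀ m, ReachableIn P m Q → n ≤ m) : dpc P Q = n :=
  le_antisymm (Nat.sInf_le h) (le_csInf ⟨n, h⟩ hmin)

def skew (p : ℤ × ℤ) : ℤ := p.2 - p.1

theorem natAbs_skew_apply_le {f : ℤ × ℤ → ℤ × ℤ} (hf : f ∈ ops) (p : ℤ × ℤ) :
    (skew (f p)).natAbs ≤ (skew p).natAbs + 1 := by
  rcases hf with rfl | rfl | rfl | rfl | rfl | rfl <;>
    simp only [skew, Lp, Lpp, Mr, Ml, Mu, Md] <;> omega

theorem ReachableIn.natAbs_skew_le {n : ℕ} {p : ℤ × ℤ} (h : ReachableIn (0, 0) n p) :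
    (skew p).natAbs ≤ n := by
  induction n generalizing p with
  | zero => simp [ReachableIn.zero_iff.mp h, skew]
  | succ n ih =>
    obtain ⟨f, hf, q, hq, rfl⟩ := ReachableIn.succ_iff.mp h
    exact (natAbs_skew_apply_le hf q).trans (Nat.add_le_add_right (ih hq) 1)

def SkewTight (p : ℤ × ℤ) : Prop :=
  (0 ≤ p.1 ∨ 0 ≤ p.2) ∧ 2 * p.1 ≤ skew p * (skew p - 1)

theorem SkewTight.apply {f : ℤ × ℤ → ℤ × ℤ} (hf : f ∈ ops) {p : ℤ × ℤ} (hp : SkewTight p)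
    (hfp : (skew (f p)).natAbs = (skew p).natAbs + 1) : SkewTight (f p) := by
  obtain ⟨x, y⟩ := p
  obtain ⟨hpos, hquad⟩ := hp
  rcases hf with rfl | rfl | rfl | rfl | rfl | rfl <;>
    simp only [SkewTight, skew, Lp, Lpp, Mr, Ml, Mu, Md] at hfp hpos hquad ⊢ <;>
    refine ⟨by omega, ?_⟩
  · nlinarith [show 0 ≤ y - x by omega]
  · nlinarith [show y - x ≤ 0 by omega]
  · nlinarith [show y - x ≤ 0 by omega]
  · nlinarith [show 0 ≤ y - x by omega]
  · nlinarith [show 0 ≤ y - x by omega]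
  · nlinarith [show y - x ≤ 0 by omega]

theorem ReachableIn.skewTight {p : ℤ × ℤ} (h : ReachableIn (0, 0) (skew p).natAbs p) :
    SkewTight p := by
  generalize hn : (skew p).natAbs = n at h
  induction n generalizing p with
  | zero =>
    rw [ReachableIn.zero_iff.mp h]
    exact ⟨Or.inl le_rfl, by simp [skew]⟩
  | succ n ih =>
    obtain ⟨f, hf, q, hq, rfl⟩ := ReachableIn.succ_iff.mp h
    have hqn : (skew q).natAbs = n :=
      le_antisymm hq.natAbs_skew_le (by have := natAbs_skew_apply_le hf q; omega)
    exact (ih hqn hq).apply hf (by omega)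

theorem SkewTight.exists_pred {p : ℤ × ℤ} {n : ℕ} (hp : SkewTight p)
    (hn : (skew p).natAbs = n + 1) :
    ∃ f ∈ ops, ∃ q, SkewTight q ∧ (skew q).natAbs = n ∧ f q = p := by
  obtain ⟨x, y⟩ := p
  obtain ⟨hpos, hquad⟩ := hp
  simp only [skew] at hn hpos hquad
  have hn2 : (n : ℤ) ≤ n * n := mod_cast Nat.le_mul_self n
  rcases Int.natAbs_eq (y - x) with hd | hd <;> rw [hn] at hd <;> push_cast at hd
  · obtain rfl : y = x + n + 1 := by omega
    rcases le_or_gt 0 x with hx | hx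
    · refine ⟨Lpp, by simp [ops], (x, x - n), ⟨Or.inl hx, ?_⟩, by simp [skew], ?_⟩
      · simp only [skew]; nlinarith
      · simp only [Lpp, Prod.mk.injEq, true_and]; ring
    · refine ⟨Ml, by simp [ops], (x + 1, x + n + 1), ⟨Or.inr (by omega), ?_⟩, ?_, ?_⟩
      · simp only [skew]; nlinarith
      · simp only [skew]; omega
      · simp only [Ml, add_sub_cancel_right]
  · obtain rfl : y = x - n - 1 := by omega
    have hx : 0 ≤ x := by omega
    rcases le_or_gt (2 * x) (n * (n + 1)) with hsmall | hlarge
    · refine ⟨Md, by simp [ops], (x, x - n), ⟨Or.inl hx, ?_⟩, by simp [skew], ?_⟩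
      · simp only [skew]; nlinarith
      · rfl
    · have hxn : (n : ℤ) < x := by nlinarith
      refine ⟨Lp, by simp [ops], (x - 2 * n - 1, x - n - 1), ⟨Or.inr (by omega), ?_⟩, ?_, ?_⟩
      · simp only [skew]; nlinarith
      · simp only [skew]; omega
      · simp only [Lp, Prod.mk.injEq, and_true]; ring

theorem SkewTight.reachableIn {p : ℤ × ℤ} (hp : SkewTight p) :
    ReachableIn (0, 0) (skew p).natAbs p := by
  generalize hn : (skew p).natAbs = n
  induction n generalizing p with
  | zero =>
    obtain ⟨x, y⟩ := p
    obtain ⟨hpos, hquad⟩ := hp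
    simp only [skew] at hn hpos hquad
    obtain rfl : y = x := by omega
    obtain rfl : y = 0 := by simp only [sub_self, zero_mul, or_self] at hpos hquad; omega
    exact ReachableIn.refl _
  | succ n ih =>
    obtain ⟨f, hf, q, hq, hqn, rfl⟩ := hp.exists_pred hn
    exact (ih hq hqn).step hf

theorem dpc_origin_eq_natAbs_skew_iff (p : ℤ × ℤ) :
    dpc (0, 0) p = (skew p).natAbs ↔ SkewTight p :=
  ⟨fun h => ReachableIn.skewTight (h ▸ reachableIn_dpc (0, 0) p),
    fun hp => dpc_eq_of_reachableIn hp.reachableIn fun _ hm => hm.natAbs_skew_le⟩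

theorem dpc_origin_eq_iff_of_snd_eq_add (x : ℤ) (r : ℕ) :
    dpc (0, 0) (x, x + r) = r ↔ -(r : ℤ) ≤ x ∧ x ≤ (r : ℤ) * ((r : ℤ) - 1) / 2 := by
  have hskew : skew (x, x + r) = r := add_sub_cancel_left x _
  have key := dpc_origin_eq_natAbs_skew_iff (x, x + r)
  rw [hskew, Int.natAbs_natCast] at key
  rw [key, SkewTight, hskew, Int.le_ediv_iff_mul_le two_pos]
  constructor
  · rintro ⟨hpos, hquad⟩
    exact ⟨by omega, by linarith⟩
  · rintro ⟨hlow, hquad⟩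
    exact ⟨Or.inr (by omega), by linarith⟩

theorem dpc_origin_eq_iff_of_snd_eq_sub (x : ℤ) (r : ℕ) :
    dpc (0, 0) (x, x - r) = r ↔ 0 ≤ x ∧ x ≤ (r : ℤ) * ((r : ℤ) + 1) / 2 := by
  have hskew : skew (x, x - r) = -r := by simp [skew]
  have key := dpc_origin_eq_natAbs_skew_iff (x, x - r)
  rw [hskew, Int.natAbs_neg, Int.natAbs_natCast] at key
  rw [key, SkewTight, hskew, Int.le_ediv_iff_mul_le two_pos]
  constructor
  · rintro ⟨hpos, hquad⟩
    exact ⟨by omega, by linarith⟩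
  · rintro ⟨hlow, hquad⟩
    exact ⟨Or.inl hlow, by linarith⟩

theorem boundary_extreme_lines (r : ℕ) :
    ({X : ℤ × ℤ | dpc (0, 0) X = r ∧ X.2 = X.1 + (r : ℤ)} =
      {X : ℤ × ℤ | ∃ x : ℤ, -(r : ℤ) ≤ x ∧ x ≤ (r : ℤ) * ((r : ℤ) - 1) / 2 ∧
        X = (x, x + (r : ℤ))}) ∧
    ({X : ℤ × ℤ | dpc (0, 0) X = r ∧ X.2 = X.1 - (r : ℤ)} =
      {X : ℤ × ℤ | ∃ x : ℤ, 0 ≤ x ∧ x ≤ (r : ℤ) * ((r : ℤ) + 1) / 2 ∧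
        X = (x, x - (r : ℤ))}) := by
  constructor <;> ext X <;> constructor
  · rintro ⟨hd, hX⟩
    rw [show X = (X.1, X.1 + r) from Prod.ext rfl hX] at hd ⊢
    obtain ⟨hlow, hhigh⟩ := (dpc_origin_eq_iff_of_snd_eq_add _ r).mp hd
    exact ⟨X.1, hlow, hhigh, rfl⟩
  · rintro ⟨x, hlow, hhigh, rfl⟩
    exact ⟨(dpc_origin_eq_iff_of_snd_eq_add x r).mpr ⟨hlow, hhigh⟩, rfl⟩
  · rintro ⟨hd, hX⟩
    rw [show X = (X.1, X.1 - r) from Prod.ext rfl hX] at hd ⊢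
    obtain ⟨hlow, hhigh⟩ := (dpc_origin_eq_iff_of_snd_eq_sub _ r).mp hd
    exact ⟨X.1, hlow, hhigh, rfl⟩
  · rintro ⟨x, hlow, hhigh, rfl⟩
    exact ⟨(dpc_origin_eq_iff_of_snd_eq_sub x r).mpr ⟨hlow, hhigh⟩, rfl⟩
end

section
/- Let r ≥ 2 and c be integers with the same parity and |c| ≤ r - 2, and write |c| = r - 2k. If 0 ≤ c ≤ r-2, the set of nonnegative integers x such that d_pc(O,(x,x+c)) = r is the integer interval [ (r-1-k)(r-2-k)/2 + k , (r-k)(r-k-1)/2 + k ]; if -(r-2) ≤ c < 0, it is the integer interval [ (r-k)(r-k-1)/2 + 1 , (r-k+1)(r-k)/2 ]. -/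
/-!
Record a word of `n = a + b` operators by the pair `(a, b)` with `x - y = a - b` at its end
point: `Mr`, `Md` raise `a`, `Ml`, `Mu` raise `b`, and `Lp`, `Lpp` send `(a, b)` to `(b + 1, a)`
and `(b, a + 1)`. By induction on the word, its end point has `x ≤ C(max(a, b), 2) + a`, and
conversely every `0 ≤ x` up to that bound on the diagonal `x - y = a - b` is reached by
`a + b` operators, by choosing the last one. The bound grows when `a` and `b` both grow, so
`d_pc(O, (x, x - a + b)) = a + b` exactly when `x` exceeds the bound for `(a - 1, b - 1)` but not
the one for `(a, b)`. On the line `y = x + c` the relevant pairs are `(k, r - k)` for `c ≥ 0` and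
`(r - k, k)` for `c < 0`.
-/

namespace ParabolicTaxicab

def choose2 (t : ℤ) : ℤ := t * (t - 1) / 2

lemma two_mul_choose2 (t : ℤ) : 2 * choose2 t = t * (t - 1) :=
  Int.mul_ediv_cancel' (Int.even_mul_pred_self t).two_dvd

lemma choose2_succ (t : ℤ) : choose2 (t + 1) = choose2 t + t := by
  linarith [two_mul_choose2 t, two_mul_choose2 (t + 1)]

lemma choose2_le_choose2 {s t : ℤ} (hs : 0 ≤ s) (hst : s ≤ t) : choose2 s ≤ choose2 t := by
  obtain rfl | hlt := hst.eq_or_lt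
  · rfl
  · nlinarith [two_mul_choose2 s, two_mul_choose2 t,
      mul_nonneg (sub_nonneg.2 hst) (by omega : 0 ≤ t + s - 1)]

lemma two_mul_sub_three_le_choose2 (t : ℤ) : 2 * t - 3 ≤ choose2 t := by
  have : 0 ≤ (t - 2) * (t - 3) := by
    rcases le_or_gt t 2 with h | h
    · nlinarith
    · nlinarith
  linarith [two_mul_choose2 t]

lemma choose2_nonneg {t : ℤ} (ht : 0 ≤ t) : 0 ≤ choose2 t :=
  choose2_le_choose2 le_rfl ht

/-- The largest `x` such that `(x, x - a + b)` is reachable from `O` in exactly `a + b` steps: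
`a + b` is the number of steps and `a - b` the diagonal `x - y` they end on. -/
def maxX (a b : ℤ) : ℤ := choose2 (max a b) + a

lemma maxX_of_le {a b : ℤ} (h : a ≤ b) : maxX a b = choose2 b + a := by
  rw [maxX, max_eq_right h]

lemma maxX_of_ge {a b : ℤ} (h : b ≤ a) : maxX a b = choose2 (a + 1) := by
  rw [maxX, max_eq_left h, choose2_succ]

lemma maxX_mono {a b a' b' : ℤ} (ha : 0 ≤ a) (haa : a ≤ a') (hbb : b ≤ b') :
    maxX a b ≤ maxX a' b' := by
  have := choose2_le_choose2 (le_max_of_le_left ha) (max_le_max haa hbb)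
  unfold maxX
  linarith

lemma maxX_nonneg {a b : ℤ} (ha : 0 ≤ a) : 0 ≤ maxX a b :=
  add_nonneg (choose2_nonneg (le_max_of_le_left ha)) ha

lemma maxX_Lp {a b : ℤ} (ha : 0 ≤ a) : maxX a b - 2 * (a - b) + 1 ≤ maxX (b + 1) a := by
  rcases le_total a b with h | h
  · rw [maxX_of_le h, maxX_of_ge (by omega : a ≤ b + 1), choose2_succ, choose2_succ]
    linarith
  · have := choose2_le_choose2 (by omega) (le_max_right (b + 1) a)
    rw [maxX_of_ge h, choose2_succ, maxX]
    linarith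

lemma maxX_Lpp {a b : ℤ} (hb : 0 ≤ b) : maxX a b ≤ maxX b (a + 1) := by
  rcases le_total a b with h | h
  · have := choose2_le_choose2 (by omega) (le_max_left b (a + 1))
    rw [maxX_of_le h, maxX]
    linarith
  · rw [maxX_of_ge h, maxX_of_le (by omega : b ≤ a + 1)]
    linarith

lemma maxX_add_one_le {a b : ℤ} (ha : 0 ≤ a) : maxX a b + 1 ≤ maxX (a + 1) b := by
  have := choose2_le_choose2 (le_max_of_le_left ha)
    (max_le_max (by omega : a ≤ a + 1) le_rfl : max a b ≤ _)
  unfold maxX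
  linarith

def IsReachableIn (n : ℕ) (P : ℤ × ℤ) : Prop :=
  ∃ l : List ((ℤ × ℤ) → (ℤ × ℤ)), l.length = n ∧ (∀ f ∈ l, f ∈ ops) ∧
    l.foldr (fun f p => f p) (0, 0) = P

lemma dpc_origin (P : ℤ × ℤ) : dpc (0, 0) P = sInf {n | IsReachableIn n P} := rfl

lemma IsReachableIn.apply {n : ℕ} {P : ℤ × ℤ} {f : ℤ × ℤ → ℤ × ℤ} (h : IsReachableIn n P)
    (hf : f ∈ ops) : IsReachableIn (n + 1) (f P) := by
  obtain ⟨l, rfl, hl, rfl⟩ := h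
  exact ⟨f :: l, rfl, List.forall_mem_cons.2 ⟨hf, hl⟩, rfl⟩

def Admissible (n : ℕ) (P : ℤ × ℤ) : Prop :=
  ∃ a b : ℤ, 0 ≤ a ∧ 0 ≤ b ∧ a + b = n ∧ P.1 - P.2 = a - b ∧ P.1 ≤ maxX a b

lemma Admissible.apply {n : ℕ} {P : ℤ × ℤ} {f : ℤ × ℤ → ℤ × ℤ} (h : Admissible n P)
    (hf : f ∈ ops) : Admissible (n + 1) (f P) := by
  obtain ⟨a, b, ha, hb, hn, hd, hx⟩ := h
  obtain ⟨x, y⟩ := P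
  simp only [ops, Set.mem_insert_iff, Set.mem_singleton_iff] at hf
  dsimp only at hd hx
  rcases hf with rfl | rfl | rfl | rfl | rfl | rfl
  · exact ⟨b + 1, a, by omega, ha, by omega, by simp only [Lp]; omega,
      by simp only [Lp]; linarith [maxX_Lp (b := b) ha]⟩
  · exact ⟨b, a + 1, hb, by omega, by omega, by simp only [Lpp]; omega,
      by simp only [Lpp]; linarith [maxX_Lpp (a := a) hb]⟩
  · exact ⟨a + 1, b, by omega, hb, by omega, by simp only [Mr]; omega,
      by simp only [Mr]; linarith [maxX_add_one_le (b := b) ha]⟩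
  · exact ⟨a, b + 1, ha, by omega, by omega, by simp only [Ml]; omega,
      by simp only [Ml]; linarith [maxX_mono ha le_rfl (by omega : b ≤ b + 1)]⟩
  · exact ⟨a, b + 1, ha, by omega, by omega, by simp only [Mu]; omega,
      by simp only [Mu]; linarith [maxX_mono ha le_rfl (by omega : b ≤ b + 1)]⟩
  · exact ⟨a + 1, b, by omega, hb, by omega, by simp only [Md]; omega,
      by simp only [Md]; linarith [maxX_add_one_le (b := b) ha]⟩

lemma IsReachableIn.admissible {n : ℕ} {P : ℤ × ℤ} (h : IsReachableIn n P) :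
    Admissible n P := by
  obtain ⟨l, rfl, hl, rfl⟩ := h
  induction l with
  | nil => exact ⟨0, 0, le_rfl, le_rfl, rfl, rfl, le_rfl⟩
  | cons f l ih =>
    exact (ih fun g hg => hl g (List.mem_cons_of_mem f hg)).apply (hl f List.mem_cons_self)

lemma isReachableIn_of_le_maxX : ∀ (n : ℕ) {a b x : ℤ}, 0 ≤ a → 0 ≤ b → (n : ℤ) = a + b →
    0 ≤ x → x ≤ maxX a b → IsReachableIn n (x, x - a + b)
  | 0, a, b, x, ha, hb, hn, hx, hxa => by
    obtain ⟨rfl, rfl⟩ : a = 0 ∧ b = 0 := by omega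
    obtain rfl : x = 0 := le_antisymm hxa hx
    exact ⟨[], rfl, by simp, rfl⟩
  | n + 1, a, b, x, ha, hb, hn, hx, hxa => by
    push_cast at hn
    have pred : ∀ {f} (a' b' x' : ℤ), f ∈ ops → 0 ≤ a' → 0 ≤ b' → (n : ℤ) = a' + b' → 0 ≤ x' →
        x' ≤ maxX a' b' → f (x', x' - a' + b') = (x, x - a + b) →
        IsReachableIn (n + 1) (x, x - a + b) := fun a' b' x' hf ha' hb' hn' hx' hxa' he =>
      he ▸ (isReachableIn_of_le_maxX n ha' hb' hn' hx' hxa').apply hf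
    have down : 1 ≤ a → x ≤ maxX (a - 1) b + 1 → IsReachableIn (n + 1) (x, x - a + b) := by
      intro ha1 hx'
      obtain rfl | hx1 := hx.eq_or_lt
      · exact pred (f := Md) (a - 1) b 0 (by simp [ops]) (by omega) hb (by omega) le_rfl
          (maxX_nonneg (by omega)) (by ext <;> simp [Md]; ring)
      · exact pred (f := Mr) (a - 1) b (x - 1) (by simp [ops]) (by omega) hb (by omega) (by omega)
          (by omega) (by ext <;> simp [Mr])
    obtain rfl | ha1 := ha.eq_or_lt
    · rw [maxX_of_le hb] at hxa
      exact pred (f := Lpp) (b - 1) 0 x (by simp [ops]) (by omega) le_rfl (by omega) hx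
        (by rw [maxX_of_ge (by omega), sub_add_cancel]; omega) (by ext <;> simp [Lpp]; ring)
    rcases le_or_gt a b with hab | hba
    · rw [maxX_of_le hab] at hxa
      exact down ha1 (by rw [maxX_of_le (by omega)]; omega)
    rw [maxX_of_ge hba.le] at hxa
    obtain rfl | hb1 := hb.eq_or_lt
    · -- the ranges reached from `(a - 1, 0)` and from `(0, a - 1)` overlap as `2 a - 3 ≤ choose2 a`
      have := two_mul_sub_three_le_choose2 a
      have hsucc := choose2_succ (a - 1)
      rw [sub_add_cancel] at hsucc
      rcases le_or_gt x (choose2 a + 1) with hxa' | hxa'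
      · exact down ha1 (by rw [maxX_of_ge (by omega), sub_add_cancel]; omega)
      · exact pred (f := Lp) 0 (a - 1) (x - 2 * a + 1) (by simp [ops]) le_rfl (by omega)
          (by omega) (by omega) (by rw [maxX_of_le (by omega)]; rw [choose2_succ] at hxa; omega)
          (by ext <;> simp [Lp] <;> ring)
    · exact pred (f := Mu) a (b - 1) x (by simp [ops]) ha (by omega) (by omega) hx
        (by rwa [maxX_of_ge (by omega)]) (by ext <;> simp [Mu]; ring)

lemma isReachableIn_iff {n : ℕ} {a b x : ℤ} (ha : 0 ≤ a) (hb : 0 ≤ b) (hn : (n : ℤ) = a + b)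
    (hx : 0 ≤ x) : IsReachableIn n (x, x - a + b) ↔ x ≤ maxX a b := by
  refine ⟨fun h => ?_, isReachableIn_of_le_maxX n ha hb hn hx⟩
  obtain ⟨a', b', -, -, hn', hd, hxa⟩ := h.admissible
  dsimp only at hd hxa
  obtain ⟨rfl, rfl⟩ : a' = a ∧ b' = b := by omega
  exact hxa

lemma le_maxX_sub_one_of_isReachableIn {m : ℕ} {a b x : ℤ} (hm : (m : ℤ) < a + b)
    (h : IsReachableIn m (x, x - a + b)) : x ≤ maxX (a - 1) (b - 1) := by
  obtain ⟨a', b', ha', -, hm', hd, hxa⟩ := h.admissible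
  dsimp only at hd hxa
  exact hxa.trans (maxX_mono ha' (by omega) (by omega))

theorem dpc_eq_iff {a b x : ℤ} (ha : 1 ≤ a) (hb : 1 ≤ b) (hx : 0 ≤ x) :
    (dpc (0, 0) (x, x - a + b) : ℤ) = a + b ↔ maxX (a - 1) (b - 1) < x ∧ x ≤ maxX a b := by
  rw [dpc_origin]
  set S := {n | IsReachableIn n (x, x - a + b)}
  have hS : ∀ {n : ℕ}, (n : ℤ) = a + b → (n ∈ S ↔ x ≤ maxX a b) := fun hn =>
    isReachableIn_iff (by omega) (by omega) hn hx
  have hS' : ∀ {n : ℕ}, (n : ℤ) = a + b - 2 → (n ∈ S ↔ x ≤ maxX (a - 1) (b - 1)) := by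
    intro n hn
    have := isReachableIn_iff (n := n) (a := a - 1) (b := b - 1) (by omega) (by omega)
      (by omega) hx
    rwa [show x - (a - 1) + (b - 1) = x - a + b by ring] at this
  constructor
  · intro hd
    have hmem : sInf S ∈ S := Nat.sInf_mem (Nat.nonempty_of_pos_sInf (by omega))
    refine ⟨lt_of_not_ge fun hlo => ?_, (hS hd).1 hmem⟩
    have := Nat.sInf_le ((hS' (n := (a + b - 2).toNat) (by omega)).2 hlo)
    omega
  · rintro ⟨hlo, hhi⟩
    have hmem : (a + b).toNat ∈ S := (hS (by omega)).2 hhi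
    have hle := Nat.sInf_le hmem
    refine le_antisymm (by omega) (le_of_not_gt fun hlt => ?_)
    exact hlo.not_ge (le_maxX_sub_one_of_isReachableIn hlt (Nat.sInf_mem ⟨_, hmem⟩))

theorem setOf_dpc_eq {a b : ℤ} (ha : 1 ≤ a) (hb : 1 ≤ b) :
    {x : ℤ | 0 ≤ x ∧ (dpc (0, 0) (x, x + (b - a)) : ℤ) = a + b} =
      Set.Icc (maxX (a - 1) (b - 1) + 1) (maxX a b) := by
  ext x
  rw [Set.mem_ofPred_eq, Set.mem_Icc, show x + (b - a) = x - a + b by ring]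
  constructor
  · rintro ⟨hx, hd⟩
    exact (dpc_eq_iff ha hb hx).1 hd
  · rintro ⟨hlo, hhi⟩
    have hx : 0 ≤ x := by linarith [maxX_nonneg (b := b - 1) (by omega : 0 ≤ a - 1)]
    exact ⟨hx, (dpc_eq_iff ha hb hx).2 ⟨hlo, hhi⟩⟩

end ParabolicTaxicab

open ParabolicTaxicab in
theorem nonneg_part_of_boundary_lines_general (r c k : ℤ) (hle : |c| ≤ r - 2) (hk : |c| = r - 2 * k) :
    (0 ≤ c →
      {x : ℤ | 0 ≤ x ∧ (dpc (0, 0) (x, x + c) : ℤ) = r} =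
        Set.Icc ((r - 1 - k) * (r - 2 - k) / 2 + k) ((r - k) * (r - k - 1) / 2 + k)) ∧
    (c < 0 →
      {x : ℤ | 0 ≤ x ∧ (dpc (0, 0) (x, x + c) : ℤ) = r} =
        Set.Icc ((r - k) * (r - k - 1) / 2 + 1) ((r - k + 1) * (r - k) / 2)) := by
  constructor
  · intro hc
    rw [abs_of_nonneg hc] at hle hk
    have h := setOf_dpc_eq (a := k) (b := r - k) (by omega) (by omega)
    rw [show r - k - k = c by omega, show k + (r - k) = r by ring, maxX_of_le (by omega),
      maxX_of_le (by omega)] at h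
    rw [h, choose2, choose2, show (r - k - 1) * (r - k - 1 - 1) = (r - 1 - k) * (r - 2 - k) by ring]
    congr 1
    ring
  · intro hc
    rw [abs_of_neg hc] at hle hk
    have h := setOf_dpc_eq (a := r - k) (b := k) (by omega) (by omega)
    rw [show k - (r - k) = c by omega, show r - k + k = r by ring, maxX_of_ge (by omega),
      maxX_of_ge (by omega)] at h
    rw [h, choose2, choose2, show r - k - 1 + 1 = r - k by ring,
      show (r - k + 1) * (r - k + 1 - 1) = (r - k + 1) * (r - k) by ring]

theorem nonneg_part_of_boundary_lines (r c k : ℤ) (hr : 2 ≤ r)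
    (hpar : c % 2 = r % 2) (hle : |c| ≤ r - 2) (hk : |c| = r - 2 * k) :
    (0 ≤ c →
      {x : ℤ | 0 ≤ x ∧ (dpc (0, 0) (x, x + c) : ℤ) = r} =
        Set.Icc ((r - 1 - k) * (r - 2 - k) / 2 + k) ((r - k) * (r - k - 1) / 2 + k)) ∧
    (c < 0 →
      {x : ℤ | 0 ≤ x ∧ (dpc (0, 0) (x, x + c) : ℤ) = r} =
        Set.Icc ((r - k) * (r - k - 1) / 2 + 1) ((r - k + 1) * (r - k) / 2)) :=
  nonneg_part_of_boundary_lines_general r c k hle hk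
end
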